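/- Let x₁,…,xₙ ∈ (0,1/2] and B = [b_{ij}], C = [c_{ij}] two n×n doubly stochastic matrices. Let Aₙ = (1/n)∑_{j=1}^n xⱼ, Gₙ = (∏_{j=1}^n xⱼ)^{1/n}, Aₙ' = (1/n)∑_{j=1}^n (1−xⱼ), Gₙ' = (∏_{j=1}^n (1−xⱼ))^{1/n}. Then Aₙ'/Aₙ ≤ (∏_{i=1}^n I(∑_{j=1}^n b_{ij}(1−xⱼ), ∑_{j=1}^n c_{ij}(1−xⱼ)) / I(∑_{j=1}^n b_{ij}xⱼ, ∑_{j=1}^n c_{ij}xⱼ))^{1/n} ≤ Gₙ'/Gₙ. -/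

import Mathlib

open Finset

/-- The identric mean: `I(a,b) = a` if `a = b`, and
`I(a,b) = (1/e)(b^b/a^a)^{1/(b-a)}` otherwise. -/
noncomputable def identric (a b : ℝ) : ℝ :=
  if a = b then a else (Real.exp 1)⁻¹ * (b ^ b / a ^ a) ^ (b - a)⁻¹

/-!
Since `log I(a, b)` is the mean value of `log` over `[a, b]`, the logarithm of
`I(1 - u, 1 - v) / I(u, v)` is the mean value over `[u, v]` of `g t = log (1 - t) - log t`,
which is convex on `(0, 1/2]`. By the Hermite–Hadamard inequality this mean lies between
`g ((u + v) / 2)` and `(g u + g v) / 2`. Summing over the rows, Jensen's inequality for the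
midpoints (whose mean is `Aₙ`) gives the lower bound, while `∑ᵢ g ((B x)ᵢ) ≤ ∑ⱼ g xⱼ` for a
doubly stochastic `B` (Jensen in each row, then the column sums) gives the upper bound.
Exponentiating turns these sums of `g` into the three geometric means.
-/

open Set Real MeasureTheory Matrix

section HermiteHadamard

variable {f : ℝ → ℝ} {a b : ℝ}

theorem IntervalIntegrable.comp_add_sub (hf : IntervalIntegrable f volume a b) :
    IntervalIntegrable (fun t => f (a + b - t)) volume a b := by
  simpa using (hf.comp_sub_left (a + b)).symm

theorem integral_eq_integral_add_comp_add_sub_div_two (hf : IntervalIntegrable f volume a b) :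
    ∫ t in a..b, f t = ∫ t in a..b, (f t + f (a + b - t)) / 2 := by
  rw [intervalIntegral.integral_div, intervalIntegral.integral_add hf hf.comp_add_sub,
    intervalIntegral.integral_comp_sub_left]
  simp

theorem ConvexOn.map_midpoint_le_add_comp_add_sub_div_two (hf : ConvexOn ℝ (Icc a b) f) {t : ℝ}
    (ht : t ∈ Icc a b) :
    f ((a + b) / 2) ≤ (f t + f (a + b - t)) / 2 := by
  have ht' : a + b - t ∈ Icc a b := ⟨by linarith [ht.2], by linarith [ht.1]⟩
  have := hf.2 ht ht' (by norm_num : (0 : ℝ) ≤ 1 / 2) (by norm_num : (0 : ℝ) ≤ 1 / 2) (by norm_num)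
  simp only [smul_eq_mul] at this
  rw [show 1 / 2 * t + 1 / 2 * (a + b - t) = (a + b) / 2 by ring] at this
  linarith

theorem ConvexOn.add_comp_add_sub_le (hf : ConvexOn ℝ (Icc a b) f) (hab : a < b) {t : ℝ}
    (ht : t ∈ Icc a b) : f t + f (a + b - t) ≤ f a + f b := by
  -- `t` and `a + b - t` are mirror-image convex combinations of `a` and `b`.
  have hba : b - a ≠ 0 := by linarith
  set θ := (b - t) / (b - a)
  have hθ : θ ∈ Icc (0 : ℝ) 1 := by
    constructor
    · exact div_nonneg (by linarith [ht.2]) (by linarith)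
    · rw [div_le_one (by linarith)]; linarith [ht.1]
  have ha : a ∈ Icc a b := left_mem_Icc.2 hab.le
  have hb : b ∈ Icc a b := right_mem_Icc.2 hab.le
  have h₁ := hf.2 ha hb hθ.1 (sub_nonneg.2 hθ.2) (add_sub_cancel θ 1)
  have h₂ := hf.2 ha hb (sub_nonneg.2 hθ.2) hθ.1 (sub_add_cancel 1 θ)
  have ht₁ : θ • a + (1 - θ) • b = t := by
    simp only [θ, smul_eq_mul]; field_simp; ring
  have ht₂ : (1 - θ) • a + θ • b = a + b - t := by
    simp only [θ, smul_eq_mul]; field_simp; ring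
  rw [ht₁] at h₁
  rw [ht₂] at h₂
  simp only [smul_eq_mul] at h₁ h₂
  linarith

theorem ConvexOn.map_midpoint_le_interval_average (hf : ConvexOn ℝ (Icc a b) f)
    (hfi : IntervalIntegrable f volume a b) (hab : a < b) :
    f ((a + b) / 2) ≤ ⨍ t in a..b, f t := by
  rw [interval_average_eq, smul_eq_mul, le_inv_mul_iff₀ (sub_pos.2 hab),
    integral_eq_integral_add_comp_add_sub_div_two hfi, ← smul_eq_mul,
    ← intervalIntegral.integral_const]
  exact intervalIntegral.integral_mono_on hab.le intervalIntegrable_const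
    ((hfi.add hfi.comp_add_sub).div_const 2) fun _ ht =>
      hf.map_midpoint_le_add_comp_add_sub_div_two ht

theorem ConvexOn.interval_average_le_add_div_two (hf : ConvexOn ℝ (Icc a b) f)
    (hfi : IntervalIntegrable f volume a b) (hab : a < b) :
    ⨍ t in a..b, f t ≤ (f a + f b) / 2 := by
  rw [interval_average_eq, smul_eq_mul, inv_mul_le_iff₀ (sub_pos.2 hab),
    integral_eq_integral_add_comp_add_sub_div_two hfi, ← smul_eq_mul,
    ← intervalIntegral.integral_const]
  exact intervalIntegral.integral_mono_on hab.le ((hfi.add hfi.comp_add_sub).div_const 2)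
    intervalIntegrable_const fun t ht => by linarith [hf.add_comp_add_sub_le hab ht]

end HermiteHadamard

noncomputable def negLogit (t : ℝ) : ℝ := log (1 - t) - log t

theorem hasDerivAt_negLogit {t : ℝ} (h₀ : t ≠ 0) (h₁ : t ≠ 1) :
    HasDerivAt negLogit (-(t * (1 - t))⁻¹) t := by
  have h₁' : 1 - t ≠ 0 := sub_ne_zero.2 h₁.symm
  have h := (((hasDerivAt_id t).const_sub 1).log h₁').sub (hasDerivAt_log h₀)
  rw [show -1 / (1 - id t) - t⁻¹ = -(t * (1 - t))⁻¹ by simp only [id]; field_simp; ring] at h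
  exact h

theorem convexOn_negLogit : ConvexOn ℝ (Ioc 0 (1 / 2)) negLogit := by
  have hderiv : ∀ t ∈ Ioc (0 : ℝ) (1 / 2), HasDerivAt negLogit (-(t * (1 - t))⁻¹) t :=
    fun t ht => hasDerivAt_negLogit ht.1.ne' (by linarith [ht.2])
  refine MonotoneOn.convexOn_of_deriv (convex_Ioc 0 _)
    (fun t ht => (hderiv t ht).continuousAt.continuousWithinAt)
    (fun t ht => (hderiv t (interior_subset ht)).differentiableAt.differentiableWithinAt) ?_
  rw [interior_Ioc]
  intro s hs t ht hst
  rw [(hderiv s (Ioo_subset_Ioc_self hs)).deriv, (hderiv t (Ioo_subset_Ioc_self ht)).deriv]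
  have : s * (1 - s) ≤ t * (1 - t) := by nlinarith [ht.2]
  exact neg_le_neg (inv_anti₀ (mul_pos hs.1 (by linarith [hs.2])) this)

theorem exp_negLogit {t : ℝ} (h₀ : 0 < t) (h₁ : t < 1) : exp (negLogit t) = (1 - t) / t := by
  rw [negLogit, exp_sub, exp_log (sub_pos.2 h₁), exp_log h₀]

theorem identric_self (a : ℝ) : identric a a = a := if_pos rfl

theorem identric_pos {a b : ℝ} (ha : 0 < a) (hb : 0 < b) : 0 < identric a b := by
  unfold identric
  split_ifs
  · exact ha
  · have := rpow_pos_of_pos ha a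
    have := rpow_pos_of_pos hb b
    positivity

theorem log_identric {a b : ℝ} (ha : 0 < a) (hb : 0 < b) (hab : a ≠ b) :
    log (identric a b) = ⨍ t in a..b, log t := by
  have hab' : b - a ≠ 0 := sub_ne_zero.2 hab.symm
  rw [interval_average_eq_div, integral_log, identric, if_neg hab,
    log_mul (by positivity) (by positivity), log_inv, log_exp,
    log_rpow (div_pos (rpow_pos_of_pos hb b) (rpow_pos_of_pos ha a)),
    log_div (rpow_pos_of_pos hb b).ne' (rpow_pos_of_pos ha a).ne', log_rpow hb, log_rpow ha]
  field_simp
  ring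

theorem intervalIntegrable_log_one_sub (a b : ℝ) :
    IntervalIntegrable (fun t => log (1 - t)) volume a b := by
  simpa using (intervalIntegral.intervalIntegrable_log' (a := 1 - a) (b := 1 - b)).comp_sub_left 1

theorem intervalIntegrable_negLogit (a b : ℝ) : IntervalIntegrable negLogit volume a b :=
  (intervalIntegrable_log_one_sub a b).sub intervalIntegral.intervalIntegrable_log'

theorem interval_average_log_one_sub (a b : ℝ) :
    ⨍ t in a..b, log (1 - t) = ⨍ t in (1 - a)..(1 - b), log t := by
  rw [interval_average_eq_div, interval_average_eq_div, intervalIntegral.integral_comp_sub_left,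
    intervalIntegral.integral_symm, show 1 - b - (1 - a) = -(b - a) by ring, div_neg, neg_div]

noncomputable def identricRatio (u v : ℝ) : ℝ := identric (1 - u) (1 - v) / identric u v

theorem identricRatio_pos {u v : ℝ} (hu : u ∈ Ioo (0 : ℝ) 1) (hv : v ∈ Ioo (0 : ℝ) 1) :
    0 < identricRatio u v :=
  div_pos (identric_pos (sub_pos.2 hu.2) (sub_pos.2 hv.2)) (identric_pos hu.1 hv.1)

theorem log_identricRatio {u v : ℝ} (hu : u ∈ Ioo (0 : ℝ) 1) (hv : v ∈ Ioo (0 : ℝ) 1)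
    (huv : u ≠ v) :
    log (identricRatio u v) = ⨍ t in u..v, negLogit t := by
  rw [identricRatio, log_div (identric_pos (sub_pos.2 hu.2) (sub_pos.2 hv.2)).ne'
      (identric_pos hu.1 hv.1).ne',
    log_identric (sub_pos.2 hu.2) (sub_pos.2 hv.2) (by contrapose! huv; linarith),
    log_identric hu.1 hv.1 huv, ← interval_average_log_one_sub, interval_average_eq_div,
    interval_average_eq_div, interval_average_eq_div, ← sub_div,
    ← intervalIntegral.integral_sub (intervalIntegrable_log_one_sub u v)
      intervalIntegral.intervalIntegrable_log']
  rfl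

theorem log_identricRatio_mem_Icc {u v : ℝ} (hu : u ∈ Ioc (0 : ℝ) (1 / 2))
    (hv : v ∈ Ioc (0 : ℝ) (1 / 2)) :
    log (identricRatio u v) ∈ Icc (negLogit ((u + v) / 2)) ((negLogit u + negLogit v) / 2) := by
  rcases eq_or_ne u v with rfl | huv
  · have : log (identricRatio u u) = negLogit u := by
      rw [identricRatio, identric_self, identric_self,
        log_div (by linarith [hu.2] : 1 - u ≠ 0) hu.1.ne']
      rfl
    rw [this, add_self_div_two, add_self_div_two]
    exact left_mem_Icc.2 le_rfl
  rw [log_identricRatio ⟨hu.1, by linarith [hu.2]⟩ ⟨hv.1, by linarith [hv.2]⟩ huv]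
  wlog h : u < v generalizing u v
  · rw [interval_average_symm, add_comm u, add_comm (negLogit u)]
    exact this hv hu huv.symm (lt_of_le_of_ne (not_lt.1 h) huv.symm)
  have hf : ConvexOn ℝ (Icc u v) negLogit :=
    convexOn_negLogit.subset (fun t ht => ⟨hu.1.trans_le ht.1, ht.2.trans hv.2⟩) (convex_Icc u v)
  exact ⟨hf.map_midpoint_le_interval_average (intervalIntegrable_negLogit u v) h,
    hf.interval_average_le_add_div_two (intervalIntegrable_negLogit u v) h⟩

section Stochastic

variable {ι : Type*} [Fintype ι] {x : ι → ℝ}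

theorem Convex.sum_div_card_mem [Nonempty ι] {s : Set ℝ} (hs : Convex ℝ s) (hx : ∀ j, x j ∈ s) :
    (∑ j, x j) / Fintype.card ι ∈ s := by
  have := hs.sum_mem (t := univ) (w := fun _ => (Fintype.card ι : ℝ)⁻¹)
    (fun _ _ => by positivity) (by simp) fun j _ => hx j
  simpa [← mul_sum, div_eq_inv_mul] using this

theorem ConvexOn.map_sum_div_card_le [Nonempty ι] {s : Set ℝ} {f : ℝ → ℝ} (hf : ConvexOn ℝ s f)
    (hx : ∀ j, x j ∈ s) : f ((∑ j, x j) / Fintype.card ι) ≤ (∑ j, f (x j)) / Fintype.card ι := by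
  have := hf.map_sum_le (t := univ) (w := fun _ => (Fintype.card ι : ℝ)⁻¹)
    (fun _ _ => by positivity) (by simp) fun j _ => hx j
  simpa [← mul_sum, div_eq_inv_mul] using this

variable [DecidableEq ι] {M : Matrix ι ι ℝ}

theorem Convex.mulVec_mem_of_mem_rowStochastic {s : Set ℝ} (hs : Convex ℝ s)
    (hM : M ∈ rowStochastic ℝ ι) (hx : ∀ j, x j ∈ s) (i : ι) : (M *ᵥ x) i ∈ s :=
  hs.sum_mem (fun _ _ => nonneg_of_mem_rowStochastic hM) (sum_row_of_mem_rowStochastic hM i)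
    fun j _ => hx j

theorem ConvexOn.sum_map_mulVec_le {s : Set ℝ} {f : ℝ → ℝ} (hf : ConvexOn ℝ s f)
    (hM : M ∈ doublyStochastic ℝ ι) (hx : ∀ j, x j ∈ s) :
    ∑ i, f ((M *ᵥ x) i) ≤ ∑ j, f (x j) :=
  calc ∑ i, f ((M *ᵥ x) i) ≤ ∑ i, ∑ j, M i j * f (x j) :=
        sum_le_sum fun i _ => hf.map_sum_le (fun _ _ => nonneg_of_mem_doublyStochastic hM)
          (sum_row_of_mem_doublyStochastic hM i) fun j _ => hx j
    _ = ∑ j, f (x j) := by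
        rw [sum_comm]
        simp [← sum_mul, sum_col_of_mem_doublyStochastic hM]

variable {B C : Matrix ι ι ℝ} (hB : B ∈ doublyStochastic ℝ ι) (hC : C ∈ doublyStochastic ℝ ι)
  (hx : ∀ j, x j ∈ Ioc (0 : ℝ) (1 / 2))
include hB hC hx

theorem sum_log_identricRatio_le_sum_negLogit :
    ∑ i, log (identricRatio ((B *ᵥ x) i) ((C *ᵥ x) i)) ≤ ∑ j, negLogit (x j) := by
  have hu := (convex_Ioc _ _).mulVec_mem_of_mem_rowStochastic
    (mem_doublyStochastic_iff_mem_rowStochastic_and_mem_colStochastic.1 hB).1 hx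
  have hv := (convex_Ioc _ _).mulVec_mem_of_mem_rowStochastic
    (mem_doublyStochastic_iff_mem_rowStochastic_and_mem_colStochastic.1 hC).1 hx
  calc ∑ i, log (identricRatio ((B *ᵥ x) i) ((C *ᵥ x) i))
      ≤ ∑ i, (negLogit ((B *ᵥ x) i) + negLogit ((C *ᵥ x) i)) / 2 :=
        sum_le_sum fun i _ => (log_identricRatio_mem_Icc (hu i) (hv i)).2
    _ = ((∑ i, negLogit ((B *ᵥ x) i)) + ∑ i, negLogit ((C *ᵥ x) i)) / 2 := by
        rw [← sum_div, sum_add_distrib]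
    _ ≤ ((∑ j, negLogit (x j)) + ∑ j, negLogit (x j)) / 2 := by
        gcongr (?_ + ?_) / 2
        · exact convexOn_negLogit.sum_map_mulVec_le hB hx
        · exact convexOn_negLogit.sum_map_mulVec_le hC hx
    _ = ∑ j, negLogit (x j) := add_self_div_two _

theorem negLogit_mean_le_mean_log_identricRatio [Nonempty ι] :
    negLogit ((∑ j, x j) / Fintype.card ι) ≤
      (∑ i, log (identricRatio ((B *ᵥ x) i) ((C *ᵥ x) i))) / Fintype.card ι := by
  obtain ⟨hBrow, hBcol⟩ :=
    mem_doublyStochastic_iff_mem_rowStochastic_and_mem_colStochastic.1 hB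
  obtain ⟨hCrow, hCcol⟩ :=
    mem_doublyStochastic_iff_mem_rowStochastic_and_mem_colStochastic.1 hC
  have hu := (convex_Ioc _ _).mulVec_mem_of_mem_rowStochastic hBrow hx
  have hv := (convex_Ioc _ _).mulVec_mem_of_mem_rowStochastic hCrow hx
  have hm : ∀ i, ((B *ᵥ x) i + (C *ᵥ x) i) / 2 ∈ Ioc (0 : ℝ) (1 / 2) := fun i =>
    ⟨by linarith [(hu i).1, (hv i).1], by linarith [(hu i).2, (hv i).2]⟩
  set m : ι → ℝ := fun i => ((B *ᵥ x) i + (C *ᵥ x) i) / 2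
  have hsum : ∑ i, m i = ∑ j, x j := by
    rw [← sum_div, sum_add_distrib, sum_mulVec_of_mem_colStochastic hBcol,
      sum_mulVec_of_mem_colStochastic hCcol, add_self_div_two]
  calc negLogit ((∑ j, x j) / Fintype.card ι) = negLogit ((∑ i, m i) / Fintype.card ι) := by
        rw [hsum]
    _ ≤ (∑ i, negLogit (m i)) / Fintype.card ι := convexOn_negLogit.map_sum_div_card_le hm
    _ ≤ (∑ i, log (identricRatio ((B *ᵥ x) i) ((C *ᵥ x) i))) / Fintype.card ι := by
        gcongr with i
        exact (log_identricRatio_mem_Icc (hu i) (hv i)).1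

end Stochastic

theorem prod_eq_exp_sum_log {ι : Type*} (s : Finset ι) {f : ι → ℝ} (hf : ∀ i ∈ s, 0 < f i) :
    ∏ i ∈ s, f i = exp (∑ i ∈ s, log (f i)) := by
  rw [exp_sum]
  exact prod_congr rfl fun i hi => (exp_log (hf i hi)).symm

section Mean

variable {ι : Type*} [Fintype ι] {x : ι → ℝ} (hx : ∀ j, x j ∈ Ioo (0 : ℝ) 1)
include hx

theorem prod_one_sub_div_prod_eq_exp_sum_negLogit :
    (∏ j, (1 - x j)) / ∏ j, x j = exp (∑ j, negLogit (x j)) := by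
  rw [← prod_div_distrib, exp_sum]
  exact prod_congr rfl fun j _ => (exp_negLogit (hx j).1 (hx j).2).symm

theorem sum_one_sub_div_card_div_eq_exp_negLogit [Nonempty ι] :
    ((∑ j, (1 - x j)) / Fintype.card ι) / ((∑ j, x j) / Fintype.card ι) =
      exp (negLogit ((∑ j, x j) / Fintype.card ι)) := by
  have hA := (convex_Ioo (0 : ℝ) 1).sum_div_card_mem hx
  rw [exp_negLogit hA.1 hA.2, sum_sub_distrib, sub_div]
  simp

end Mean

/-- Refinement of Ky Fan's inequality via two doubly stochastic matrices and the
identric mean. -/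
theorem ky_fan_refinement_identric_doubly_stochastic
    {n : ℕ} (hn : 0 < n)
    (x : Fin n → ℝ) (hx0 : ∀ j, 0 < x j) (hxhalf : ∀ j, x j ≤ 1 / 2)
    (b c : Fin n → Fin n → ℝ)
    (hb0 : ∀ i j, 0 ≤ b i j) (hbrow : ∀ i, ∑ j, b i j = 1) (hbcol : ∀ j, ∑ i, b i j = 1)
    (hc0 : ∀ i j, 0 ≤ c i j) (hcrow : ∀ i, ∑ j, c i j = 1) (hccol : ∀ j, ∑ i, c i j = 1) :
    ((∑ j, (1 - x j)) / n) / ((∑ j, x j) / n) ≤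
        (∏ i, identric (∑ j, b i j * (1 - x j)) (∑ j, c i j * (1 - x j)) /
            identric (∑ j, b i j * x j) (∑ j, c i j * x j)) ^ ((n : ℝ)⁻¹) ∧
      (∏ i, identric (∑ j, b i j * (1 - x j)) (∑ j, c i j * (1 - x j)) /
            identric (∑ j, b i j * x j) (∑ j, c i j * x j)) ^ ((n : ℝ)⁻¹) ≤
        (∏ j, (1 - x j)) ^ ((n : ℝ)⁻¹) / (∏ j, x j) ^ ((n : ℝ)⁻¹) := by
  have : Nonempty (Fin n) := ⟨⟨0, hn⟩⟩
  have hB : of b ∈ doublyStochastic ℝ (Fin n) :=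
    mem_doublyStochastic_iff_sum.2 ⟨hb0, hbrow, hbcol⟩
  have hC : of c ∈ doublyStochastic ℝ (Fin n) :=
    mem_doublyStochastic_iff_sum.2 ⟨hc0, hcrow, hccol⟩
  obtain ⟨hBrow, -⟩ := mem_doublyStochastic_iff_mem_rowStochastic_and_mem_colStochastic.1 hB
  obtain ⟨hCrow, -⟩ := mem_doublyStochastic_iff_mem_rowStochastic_and_mem_colStochastic.1 hC
  have hx : ∀ j, x j ∈ Ioc (0 : ℝ) (1 / 2) := fun j => ⟨hx0 j, hxhalf j⟩
  have hx' : ∀ j, x j ∈ Ioo (0 : ℝ) 1 := fun j => ⟨hx0 j, by linarith [hxhalf j]⟩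
  have hmiddle : ∏ i, identric (∑ j, b i j * (1 - x j)) (∑ j, c i j * (1 - x j)) /
      identric (∑ j, b i j * x j) (∑ j, c i j * x j) =
        exp (∑ i, log (identricRatio ((of b *ᵥ x) i) ((of c *ᵥ x) i))) := by
    rw [← prod_eq_exp_sum_log _ fun i _ => identricRatio_pos
      ((convex_Ioo _ _).mulVec_mem_of_mem_rowStochastic hBrow hx' i)
      ((convex_Ioo _ _).mulVec_mem_of_mem_rowStochastic hCrow hx' i)]
    simp_rw [mul_one_sub, sum_sub_distrib, hbrow, hcrow]
    rfl
  have hleft := sum_one_sub_div_card_div_eq_exp_negLogit hx'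
  have hlower := negLogit_mean_le_mean_log_identricRatio hB hC hx
  simp only [Fintype.card_fin] at hleft hlower
  rw [hleft, hmiddle, ← div_rpow (prod_nonneg fun j _ => (sub_pos.2 (hx' j).2).le)
    (prod_nonneg fun j _ => (hx0 j).le), prod_one_sub_div_prod_eq_exp_sum_negLogit hx',
    ← exp_mul, ← exp_mul, ← div_eq_mul_inv, ← div_eq_mul_inv]
  exact ⟨exp_le_exp.2 hlower, exp_le_exp.2 (div_le_div_of_nonneg_right
    (sum_log_identricRatio_le_sum_negLogit hB hC hx) n.cast_nonneg)⟩
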